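/- The hyperspace 𝒦([0,1]) of the unit interval, i.e., the set of all nonempty compact subsets of [0,1] equipped with the Hausdorff metric, has infinite Hausdorff dimension and infinite packing dimension: dim_H(𝒦([0,1])) = dim_P(𝒦([0,1])) = ∞. -/

import Mathlib

open Metric Filter Topology TopologicalSpace Set Asymptotics
open scoped ENNReal

noncomputable section

/-- A gauge function: continuous, nondecreasing on `[0,∞)`, vanishing only at 0. -/
def IsGaugeFunction (ψ : ℝ → ℝ) : Prop :=
  ContinuousOn ψ (Ici 0) ∧ MonotoneOn ψ (Ici 0) ∧ (∀ δ : ℝ, 0 ≤ δ → 0 ≤ ψ δ) ∧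
    ψ 0 = 0 ∧ ∀ δ : ℝ, 0 < δ → 0 < ψ δ

/-- A gauge family: `φ s` is a gauge function for each `s ∈ (0,∞)`, and
`φ s = o(φ t)` as `δ → 0⁺` whenever `s > t`. -/
def IsGaugeFamily (φ : ℝ → ℝ → ℝ) : Prop :=
  (∀ s : ℝ, 0 < s → IsGaugeFunction (φ s)) ∧
  ∀ s t : ℝ, 0 < t → t < s → (φ s) =o[𝓝[>] (0:ℝ)] (φ t)

/-- The jump `φ̃` of a gauge family: `φ̃ s δ = 2^(-1/φ s δ)` for `δ > 0`, and `0` at `0`. -/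
def jumpGauge (φ : ℝ → ℝ → ℝ) : ℝ → ℝ → ℝ :=
  fun s δ => if 0 < δ then (2 : ℝ) ^ (-1 / φ s δ) else 0

/-- Covering number: minimum cardinality of a finite set `F ⊆ X` whose `δ`-balls cover `E`
(`∞` if there is none). -/
def coverNum {X : Type*} [MetricSpace X] (E : Set X) (δ : ℝ) : ℕ∞ :=
  sInf ((fun F : Finset X => (F.card : ℕ∞)) '' {F : Finset X | E ⊆ ⋃ x ∈ F, ball x δ})

/-- Covering number with centers restricted to lie in `D`. -/
def coverNumIn {X : Type*} [MetricSpace X] (D E : Set X) (δ : ℝ) : ℕ∞ :=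
  sInf ((fun F : Finset X => (F.card : ℕ∞)) ''
    {F : Finset X | ↑F ⊆ D ∧ E ⊆ ⋃ x ∈ F, ball x δ})

/-- `φ`-gauged lower Minkowski dimension. -/
def lowerMinkDim {X : Type*} [MetricSpace X] (φ : ℝ → ℝ → ℝ) (E : Set X) : ℝ≥0∞ :=
  ⨅ s ∈ {s : ℝ | 0 < s ∧
      Filter.liminf (fun δ : ℝ => (coverNum E δ : ℝ≥0∞) * ENNReal.ofReal (φ s δ))
        (𝓝[>] (0:ℝ)) = 0},
    ENNReal.ofReal s

/-- `φ`-gauged upper Minkowski dimension. -/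
def upperMinkDim {X : Type*} [MetricSpace X] (φ : ℝ → ℝ → ℝ) (E : Set X) : ℝ≥0∞ :=
  ⨅ s ∈ {s : ℝ | 0 < s ∧
      Filter.limsup (fun δ : ℝ => (coverNum E δ : ℝ≥0∞) * ENNReal.ofReal (φ s δ))
        (𝓝[>] (0:ℝ)) = 0},
    ENNReal.ofReal s

/-- The packing pre-measure quantity `P^ψ_δ(E)`: supremum over countable collections of
pairwise disjoint open balls with centers in `E` and diameters at most `δ` of
`Σ ψ(diam U)`.  (Radius-`0` indices give empty balls, allowing finite collections.) -/
def packingPreDelta {X : Type*} [MetricSpace X] (ψ : ℝ → ℝ) (E : Set X) (δ : ℝ) : ℝ≥0∞ :=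
  ⨆ (c : ℕ → X) (r : ℕ → ℝ) (_ : ∀ i, 0 < r i → c i ∈ E)
    (_ : ∀ i, Metric.diam (ball (c i) (r i)) ≤ δ)
    (_ : Pairwise fun i j => Disjoint (ball (c i) (r i)) (ball (c j) (r j))),
    ∑' i, ENNReal.ofReal (ψ (Metric.diam (ball (c i) (r i))))

/-- The `ψ`-gauged packing pre-measure `P^ψ_0(E) = lim_{δ→0⁺} P^ψ_δ(E)`. -/
def packingPre {X : Type*} [MetricSpace X] (ψ : ℝ → ℝ) (E : Set X) : ℝ≥0∞ :=
  ⨅ (δ : ℝ) (_ : 0 < δ), packingPreDelta ψ E δ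

/-- The `ψ`-gauged packing measure. -/
def packingMeas {X : Type*} [MetricSpace X] (ψ : ℝ → ℝ) (E : Set X) : ℝ≥0∞ :=
  ⨅ (U : ℕ → Set X) (_ : E ⊆ ⋃ i, U i), ∑' i, packingPre ψ (U i)

/-- The `φ`-gauged packing dimension. -/
def packingDim {X : Type*} [MetricSpace X] (φ : ℝ → ℝ → ℝ) (E : Set X) : ℝ≥0∞ :=
  ⨅ s ∈ {s : ℝ | 0 < s ∧ packingMeas (φ s) E = 0}, ENNReal.ofReal s

/-- A precision family for a gauge family `φ`. -/
def IsPrecisionFamily (φ : ℝ → ℝ → ℝ) (α : ℝ → ℕ → ℚ) : Prop :=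
  (∀ s : ℝ, 0 < s →
    (∀ r : ℕ, 0 < α s r) ∧
    Filter.Tendsto (fun r : ℕ => ((α s r : ℝ))) Filter.atTop (𝓝 0) ∧
    (fun r : ℕ => φ s ((α s r : ℝ))) =O[Filter.atTop] (fun r : ℕ => φ s ((α s (r+1) : ℝ)))) ∧
  ∀ s t : ℝ, 0 < s → s < t → Summable (fun r : ℕ => φ t ((α s r : ℝ)) / φ s ((α s r : ℝ)))

/-- The hyperspace copy `𝒦(E)` of a set `E ⊆ X`: the set of nonempty compact subsets of `X`
contained in `E`, viewed as a subset of the hyperspace `𝒦(X)` of nonempty compact subsets of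
`X` with the Hausdorff metric. -/
def hyperK {X : Type*} [MetricSpace X] (E : Set X) : Set (NonemptyCompacts X) :=
  {K : NonemptyCompacts X | (K : Set X) ⊆ E}

/-!
A maximal `η`-separated subset of `F` yields both a cover of `F` by sets of diameter at most `2η`
and a packing of disjoint balls of radius `η / 2` centred in `F`. If every ball of small radius `r`
about a point of `F` has diameter at least `r`, comparing the two gives
`μH[s] F ≤ 4 ^ s * P^s(F)`, hence `dimH F ≤ dim_P F`. For every `n`, the finite sets with one
point in each of `n` short, well separated subintervals of `[0,1]` form an isometric copy of an
`n`-cube (with the sup metric) inside `𝒦([0,1])` to which this applies, so both dimensions are at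
least `n`.
-/

open MeasureTheory
open scoped NNReal

namespace Metric

variable {X : Type*} [PseudoEMetricSpace X]

instance finite_maximalSeparatedSet (ε : ℝ≥0) (A : Set X) :
    Finite (maximalSeparatedSet ε A) := by
  unfold maximalSeparatedSet
  split_ifs with h
  · exact (exists_set_encard_eq_packingNumber h).choose_spec.2.1.to_subtype
  · exact Finite.of_subsingleton

theorem _root_.TotallyBounded.packingNumber_ne_top {A : Set X} (hA : TotallyBounded A)
    {ε : ℝ≥0} (hε : ε ≠ 0) : packingNumber ε A ≠ ⊤ := by
  obtain ⟨N, -, hNfin, hN⟩ := exists_finite_isCover_of_totallyBounded (ε := ε / 2)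
    (by simpa using hε) hA
  refine ne_top_of_le_ne_top hNfin.encard_lt_top.ne ?_
  calc packingNumber ε A = packingNumber (2 * (ε / 2)) A := by rw [mul_div_cancel₀ _ two_ne_zero]
    _ ≤ externalCoveringNumber (ε / 2) A := packingNumber_two_mul_le_externalCoveringNumber _ _
    _ ≤ N.encard := hN.externalCoveringNumber_le_encard

end Metric

section Packing

variable {X : Type*} [MetricSpace X] {ψ : ℝ → ℝ} {E E' : Set X}

theorem packingPreDelta_mono_set (h : E ⊆ E') (δ : ℝ) :
    packingPreDelta ψ E δ ≤ packingPreDelta ψ E' δ :=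
  iSup₂_mono' fun c r => ⟨c, r, iSup_mono' fun hc => ⟨fun i hi => h (hc i hi), le_rfl⟩⟩

theorem packingPreDelta_mono_scale {δ δ' : ℝ} (h : δ ≤ δ') :
    packingPreDelta ψ E δ ≤ packingPreDelta ψ E δ' :=
  iSup₂_mono fun _ _ => iSup_mono fun _ =>
    iSup_mono' fun hdiam => ⟨fun i => (hdiam i).trans h, le_rfl⟩

theorem packingPre_mono (h : E ⊆ E') : packingPre ψ E ≤ packingPre ψ E' :=
  iInf₂_mono fun δ _ => packingPreDelta_mono_set h δ

theorem packingMeas_mono (h : E ⊆ E') : packingMeas ψ E ≤ packingMeas ψ E' :=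
  iInf_mono fun _ => iInf_mono' fun hU => ⟨h.trans hU, le_rfl⟩

theorem packingDim_mono {φ : ℝ → ℝ → ℝ} (h : E ⊆ E') : packingDim φ E ≤ packingDim φ E' :=
  biInf_mono fun _ hs => ⟨hs.1, le_antisymm (hs.2 ▸ packingMeas_mono h) bot_le⟩

theorem tsum_le_packingPreDelta {T : Set X} [Countable T] {ρ δ : ℝ}
    (hTE : T ⊆ E) (hT : T.PairwiseDisjoint (ball · ρ)) (hδ : 0 ≤ δ)
    (hdiam : ∀ x ∈ T, diam (ball x ρ) ≤ δ) :
    ∑' x : T, ENNReal.ofReal (ψ (diam (ball (x : X) ρ))) ≤ packingPreDelta ψ E δ := by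
  rcases isEmpty_or_nonempty T with _ | ⟨⟨x₀, -⟩⟩
  · simp
  -- indices outside the range of the enumeration `j` get radius `0`, i.e. an empty ball
  obtain ⟨j, hj⟩ := exists_injective_nat T
  set c : ℕ → X := Function.extend j Subtype.val fun _ => x₀
  set r : ℕ → ℝ := Function.extend j (fun _ => ρ) 0
  have hcr (x : T) : c (j x) = x ∧ r (j x) = ρ :=
    ⟨hj.extend_apply _ _ x, hj.extend_apply _ _ x⟩
  have hout (i : ℕ) (hi : i ∉ range j) : r i = 0 :=
    Function.extend_apply' _ _ _ fun ⟨x, hx⟩ => hi ⟨x, hx⟩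
  refine le_trans ?_ (le_iSup₂_of_le c r <| le_iSup₂_of_le ?_ ?_ <| le_iSup_of_le ?_ le_rfl)
  · calc ∑' x : T, ENNReal.ofReal (ψ (diam (ball (x : X) ρ)))
        = ∑' x : T, ENNReal.ofReal (ψ (diam (ball (c (j x)) (r (j x))))) := by
          simp only [hcr]
      _ ≤ _ := ENNReal.tsum_comp_le_tsum_of_injective hj _
  · intro i hi
    by_cases hir : i ∈ range j
    · obtain ⟨x, rfl⟩ := hir
      exact (hcr x).1 ▸ hTE x.2
    · exact absurd hi (hout i hir).not_gt
  · intro i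
    by_cases hir : i ∈ range j
    · obtain ⟨x, rfl⟩ := hir
      simpa only [hcr] using hdiam x x.2
    · simpa [hout i hir] using hδ
  · intro i i' hii'
    by_cases hir : i ∈ range j
    · by_cases hir' : i' ∈ range j
      · obtain ⟨x, rfl⟩ := hir
        obtain ⟨x', rfl⟩ := hir'
        simp only [hcr]
        exact hT x.2 x'.2 (Subtype.coe_injective.ne (hj.ne_iff.1 hii'))
      · simp [hout i' hir']
    · simp [hout i hir]

theorem le_diam_ball_of_forall_exists_dist_eq {x : X} {r : ℝ}
    (h : ∀ t ∈ Ioo 0 r, ∃ y, dist x y = t) : r ≤ diam (ball x r) := by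
  refine le_of_forall_lt_imp_le_of_dense fun t ht => ?_
  rcases le_or_gt t 0 with ht₀ | ht₀
  · exact ht₀.trans diam_nonneg
  obtain ⟨y, rfl⟩ := h t ⟨ht₀, ht⟩
  exact dist_le_diam_of_mem isBounded_ball (mem_ball_self (ht₀.trans ht)) (mem_ball'.2 ht)

variable {s ε : ℝ} {F : Set X}

theorem tsum_ediam_closedEBall_rpow_le (hs : 0 ≤ s)
    (hF : ∀ x ∈ F, ∀ t ∈ Ioo 0 ε, ∃ y, dist x y = t) {η : ℝ≥0} (hη : (η : ℝ) / 2 ≤ ε) :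
    ∑' x : maximalSeparatedSet η F, ediam (closedEBall (x : X) η) ^ s ≤
      ENNReal.ofReal (4 ^ s) * packingPreDelta (· ^ s) F η := by
  have hterm (x : X) (hx : x ∈ F) : ediam (closedEBall x η) ^ s ≤
      ENNReal.ofReal (4 ^ s) * ENNReal.ofReal (diam (ball x (η / 2)) ^ s) := by
    have hdiam : (η : ℝ) / 2 ≤ diam (ball x (η / 2)) :=
      le_diam_ball_of_forall_exists_dist_eq fun t ht => hF x hx t ⟨ht.1, ht.2.trans_le hη⟩
    calc ediam (closedEBall x η) ^ s ≤ (2 * (η : ℝ≥0∞)) ^ s :=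
          ENNReal.rpow_le_rpow ediam_closedEBall_le hs
      _ = ENNReal.ofReal (4 ^ s * ((η : ℝ) / 2) ^ s) := by
          rw [← Real.mul_rpow (by norm_num) (by positivity), ← ENNReal.ofReal_rpow_of_nonneg
            (by positivity) hs,
            show (4 : ℝ) * (η / 2) = 2 * η by ring, ENNReal.ofReal_mul zero_le_two]
          simp
      _ ≤ _ := by
          rw [← ENNReal.ofReal_mul (by positivity)]
          gcongr
  have hsep : (maximalSeparatedSet η F).PairwiseDisjoint (ball · (η / 2)) := by
    intro x hx y hy hxy
    refine ball_disjoint_ball ?_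
    have : (η : ℝ≥0∞) < edist x y := isSeparated_maximalSeparatedSet hx hy hxy
    rw [edist_nndist, ENNReal.coe_lt_coe, ← NNReal.coe_lt_coe, coe_nndist] at this
    linarith
  calc ∑' x : maximalSeparatedSet η F, ediam (closedEBall (x : X) η) ^ s
      ≤ ∑' x : maximalSeparatedSet η F,
          ENNReal.ofReal (4 ^ s) * ENNReal.ofReal (diam (ball (x : X) (η / 2)) ^ s) :=
        ENNReal.tsum_le_tsum fun x => hterm x (maximalSeparatedSet_subset x.2)
    _ = ENNReal.ofReal (4 ^ s) *
          ∑' x : maximalSeparatedSet η F, ENNReal.ofReal (diam (ball (x : X) (η / 2)) ^ s) :=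
        ENNReal.tsum_mul_left
    _ ≤ _ := by
        gcongr
        exact tsum_le_packingPreDelta maximalSeparatedSet_subset hsep η.2 fun x _ =>
          (diam_ball (by positivity)).trans_eq (by ring)

theorem hausdorffMeasure_le_packingPre [MeasurableSpace X] [BorelSpace X] (hs : 0 ≤ s)
    (hε : 0 < ε) (hFb : TotallyBounded F) (hF : ∀ x ∈ F, ∀ t ∈ Ioo 0 ε, ∃ y, dist x y = t) :
    μH[s] F ≤ ENNReal.ofReal (4 ^ s) * packingPre (· ^ s) F := by
  have hlim : Tendsto (fun η : ℝ≥0 => 2 * (η : ℝ≥0∞)) (𝓝[>] 0) (𝓝 0) := by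
    have : Continuous fun η : ℝ≥0 => 2 * (η : ℝ≥0∞) :=
      (ENNReal.continuous_const_mul ENNReal.ofNat_ne_top).comp ENNReal.continuous_coe
    simpa using this.tendsto 0 |>.mono_left nhdsWithin_le_nhds
  have hcoe : Tendsto (fun η : ℝ≥0 => (η : ℝ)) (𝓝[>] 0) (𝓝 0) :=
    (NNReal.continuous_coe.tendsto 0).mono_left nhdsWithin_le_nhds
  have hsmall : ∀ᶠ η : ℝ≥0 in 𝓝[>] 0, η ≠ 0 ∧ (η : ℝ) / 2 ≤ ε := by
    filter_upwards [self_mem_nhdsWithin, hcoe.eventually_lt_const hε] with η hη hηε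
    exact ⟨hη.ne', by linarith [η.2]⟩
  refine (Measure.hausdorffMeasure_le_liminf_tsum s F _ hlim
    (fun η (x : maximalSeparatedSet η F) => closedEBall (x : X) η)
    (.of_forall fun η x => ediam_closedEBall_le)
    (hsmall.mono fun η hη => isCover_iff_subset_iUnion_closedEBall.1
      (isCover_maximalSeparatedSet (hFb.packingNumber_ne_top hη.1)) |>.trans ?_)).trans ?_
  · exact (biUnion_eq_iUnion _ _).subset
  have h4 : ENNReal.ofReal (4 ^ s) ≠ 0 := (ENNReal.ofReal_pos.2 (by positivity)).ne'
  simp only [packingPre, ENNReal.mul_iInf_of_ne h4 ENNReal.ofReal_ne_top]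
  refine le_iInf₂ fun δ hδ => liminf_le_of_frequently_le' ?_
  refine Eventually.frequently (f := 𝓝[>] (0 : ℝ≥0)) ?_
  have hlt : ∀ᶠ η : ℝ≥0 in 𝓝[>] 0, (η : ℝ) < δ := hcoe.eventually_lt_const hδ
  filter_upwards [hsmall, hlt] with η hη hηδ
  exact (tsum_ediam_closedEBall_rpow_le hs hF hη.2).trans
    (by gcongr; exact packingPreDelta_mono_scale hηδ.le)

theorem hausdorffMeasure_le_packingMeas [MeasurableSpace X] [BorelSpace X] (hs : 0 ≤ s)
    (hε : 0 < ε) (hFb : TotallyBounded F) (hF : ∀ x ∈ F, ∀ t ∈ Ioo 0 ε, ∃ y, dist x y = t) :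
    μH[s] F ≤ ENNReal.ofReal (4 ^ s) * packingMeas (· ^ s) F := by
  have h4 : ENNReal.ofReal (4 ^ s) ≠ 0 := (ENNReal.ofReal_pos.2 (by positivity)).ne'
  simp only [packingMeas, ENNReal.mul_iInf_of_ne h4 ENNReal.ofReal_ne_top]
  refine le_iInf₂ fun U hU => ?_
  have hpiece (i : ℕ) : μH[s] (U i ∩ F) ≤ ENNReal.ofReal (4 ^ s) * packingPre (· ^ s) (U i) :=
    (hausdorffMeasure_le_packingPre hs hε (hFb.subset inter_subset_right)
      fun x hx => hF x hx.2).trans (by gcongr; exact packingPre_mono inter_subset_left)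
  calc μH[s] F ≤ μH[s] (⋃ i, U i ∩ F) := measure_mono fun x hx => by
        obtain ⟨i, hi⟩ := mem_iUnion.1 (hU hx)
        exact mem_iUnion.2 ⟨i, hi, hx⟩
    _ ≤ ∑' i, μH[s] (U i ∩ F) := measure_iUnion_le _
    _ ≤ ∑' i, ENNReal.ofReal (4 ^ s) * packingPre (· ^ s) (U i) := ENNReal.tsum_le_tsum hpiece
    _ = _ := ENNReal.tsum_mul_left

theorem dimH_le_packingDim (hε : 0 < ε) (hFb : TotallyBounded F)
    (hF : ∀ x ∈ F, ∀ t ∈ Ioo 0 ε, ∃ y, dist x y = t) :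
    dimH F ≤ packingDim (fun s δ : ℝ => δ ^ s) F := by
  borelize X
  refine le_iInf₂ fun s ⟨hs, hP⟩ => ?_
  have hμ : μH[s] F = 0 := by
    simpa [hP] using hausdorffMeasure_le_packingMeas hs.le hε hFb hF
  exact dimH_le_of_hausdorffMeasure_ne_top (d := s.toNNReal)
    (by rw [Real.coe_toNNReal s hs.le, hμ]; exact ENNReal.zero_ne_top)

end Packing

section Hyperspace

variable {X : Type*} [MetricSpace X]

theorem hausdorffDist_range_eq {ι : Type*} [Finite ι] {a b : ι → X} {D : ℝ}
    (hab : ∀ k, dist (a k) (b k) ≤ D) (k₀ : ι) (hk₀ : ∀ j, D ≤ dist (a k₀) (b j)) :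
    hausdorffDist (range a) (range b) = D := by
  have hne : hausdorffEDist (range a) (range b) ≠ ⊤ :=
    hausdorffEDist_ne_top_of_nonempty_of_bounded ⟨a k₀, mem_range_self k₀⟩
      ⟨b k₀, mem_range_self k₀⟩ (finite_range a).isBounded (finite_range b).isBounded
  refine le_antisymm (hausdorffDist_le_of_mem_dist (dist_nonneg.trans (hab k₀))
    (forall_mem_range.2 fun k => ⟨b k, mem_range_self k, hab k⟩)
    (forall_mem_range.2 fun k => ⟨a k, mem_range_self k, dist_comm (b k) (a k) ▸ hab k⟩)) ?_
  exact ((le_infDist ⟨b k₀, mem_range_self k₀⟩).2 (forall_mem_range.2 hk₀)).trans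
    (infDist_le_hausdorffDist_of_mem (mem_range_self k₀) hne)

def cubeSide (m : ℕ) : ℝ := (3 * (m + 1))⁻¹

theorem cubeSide_pos (m : ℕ) : 0 < cubeSide m := by
  unfold cubeSide; positivity

abbrev Cube (m : ℕ) : Type := Fin (m + 1) → Icc (0 : ℝ) (cubeSide m)

theorem cubePoint_mem (m : ℕ) (x : Cube m) (k : Fin (m + 1)) :
    3 * cubeSide m * k + x k ∈ Icc (0 : ℝ) 1 := by
  have hk : (k : ℝ) + 1 ≤ m + 1 := by exact_mod_cast k.isLt
  have h3 : 3 * cubeSide m * (m + 1) = 1 := by unfold cubeSide; field_simp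
  have := cubeSide_pos m
  obtain ⟨hx₀, hx₁⟩ := (x k).2
  constructor <;> nlinarith

/-- Coordinate `k` is placed in the block `[3ak, 3ak + a]`, `a = cubeSide m`; distinct blocks are
`2a` apart, which is what makes `cubeEmbedding` an isometry. -/
def cubePoint (m : ℕ) (x : Cube m) (k : Fin (m + 1)) : Icc (0 : ℝ) 1 :=
  ⟨3 * cubeSide m * k + x k, cubePoint_mem m x k⟩

def cubeEmbedding (m : ℕ) (x : Cube m) : NonemptyCompacts (Icc (0 : ℝ) 1) :=
  ⟨⟨range (cubePoint m x), (finite_range _).isCompact⟩, range_nonempty _⟩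

theorem dist_cubePoint_self (m : ℕ) (x y : Cube m) (k : Fin (m + 1)) :
    dist (cubePoint m x k) (cubePoint m y k) = dist (x k) (y k) := by
  simp [cubePoint, Subtype.dist_eq, Real.dist_eq]

theorem two_mul_cubeSide_le_dist_cubePoint (m : ℕ) (x y : Cube m) {k j : Fin (m + 1)}
    (h : k ≠ j) : 2 * cubeSide m ≤ dist (cubePoint m x k) (cubePoint m y j) := by
  obtain ⟨hx₀, hx₁⟩ := (x k).2
  obtain ⟨hy₀, hy₁⟩ := (y j).2
  have := cubeSide_pos m
  rw [Subtype.dist_eq, Real.dist_eq]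
  rcases h.lt_or_gt with h | h
  · have hkj : (k : ℝ) + 1 ≤ j := by exact_mod_cast h
    rw [abs_sub_comm]
    refine le_trans ?_ (le_abs_self _)
    simp only [cubePoint]
    nlinarith
  · have hkj : (j : ℝ) + 1 ≤ k := by exact_mod_cast h
    refine le_trans ?_ (le_abs_self _)
    simp only [cubePoint]
    nlinarith

theorem isometry_cubeEmbedding (m : ℕ) : Isometry (cubeEmbedding m) := by
  refine Isometry.of_dist_eq fun x y => ?_
  obtain ⟨k₀, -, hk₀⟩ := Finset.exists_mem_eq_sup Finset.univ Finset.univ_nonempty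
    fun k => nndist (x k) (y k)
  have hxy : dist x y = dist (x k₀) (y k₀) := by rw [dist_pi_def, hk₀, coe_nndist]
  refine hausdorffDist_range_eq (fun k => ?_) k₀ fun j => ?_
  · exact (dist_cubePoint_self m x y k).trans_le (dist_le_pi_dist x y k)
  · rcases eq_or_ne k₀ j with rfl | h
    · rw [dist_cubePoint_self, hxy]
    · calc dist x y ≤ cubeSide m := (dist_pi_le_iff (cubeSide_pos m).le).2 fun k => by
            simpa [Subtype.dist_eq] using Real.dist_le_of_mem_Icc (x k).2 (y k).2
        _ ≤ 2 * cubeSide m := by linarith [cubeSide_pos m]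
        _ ≤ _ := two_mul_cubeSide_le_dist_cubePoint m x y h

theorem dimH_univ_cube (m : ℕ) : dimH (univ : Set (Cube m)) = m + 1 := by
  have hval : Isometry fun x : Cube m => Subtype.val ∘ x := isometry_subtype_coe.postcomp_pi
  have hrange :
      range (fun x : Cube m => Subtype.val ∘ x) = univ.pi fun _ => Icc 0 (cubeSide m) := by
    ext g
    simp only [mem_range, Set.mem_pi, mem_univ, true_implies]
    refine ⟨?_, fun hg => ⟨fun k => ⟨g k, hg k⟩, rfl⟩⟩
    rintro ⟨x, rfl⟩ k
    exact (x k).2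
  have hside := cubeSide_pos m
  rw [← hval.dimH_image, image_univ, hrange, Real.dimH_of_mem_nhds (x := fun _ => cubeSide m / 2)
    (set_pi_mem_nhds finite_univ fun _ _ => Icc_mem_nhds (by linarith) (by linarith))]
  simp

theorem dimH_range_cubeEmbedding (m : ℕ) : dimH (range (cubeEmbedding m)) = m + 1 := by
  rw [← image_univ, (isometry_cubeEmbedding m).dimH_image, dimH_univ_cube]

theorem exists_dist_eq_cube (m : ℕ) (x : Cube m) {t : ℝ} (ht : t ∈ Icc 0 (cubeSide m / 2)) :
    ∃ y : Cube m, dist x y = t := by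
  obtain ⟨v, hv, hvt⟩ : ∃ v ∈ Icc 0 (cubeSide m), dist (x 0 : ℝ) v = t := by
    obtain ⟨hx₀, hx₁⟩ := (x 0).2
    rcases le_total (x 0 : ℝ) (cubeSide m / 2) with h | h
    · exact ⟨x 0 + t, ⟨by linarith [ht.1], by linarith [ht.2]⟩,
        by simp [abs_of_nonneg ht.1]⟩
    · exact ⟨x 0 - t, ⟨by linarith [ht.2], by linarith [ht.1]⟩,
        by simp [abs_of_nonneg ht.1]⟩
  refine ⟨Function.update x 0 ⟨v, hv⟩, le_antisymm ((dist_pi_le_iff ht.1).2 fun k => ?_) ?_⟩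
  · rcases eq_or_ne k 0 with rfl | hk
    · simp [Subtype.dist_eq, hvt]
    · simp [hk, ht.1]
  · calc t = dist (x 0) (Function.update x 0 ⟨v, hv⟩ 0) := by simp [Subtype.dist_eq, hvt]
      _ ≤ _ := dist_le_pi_dist _ _ 0

theorem exists_dist_eq_of_mem_range_cubeEmbedding (m : ℕ) :
    ∀ K ∈ range (cubeEmbedding m), ∀ t ∈ Ioo 0 (cubeSide m / 2), ∃ L, dist K L = t := by
  rintro _ ⟨x, rfl⟩ t ht
  obtain ⟨y, hy⟩ := exists_dist_eq_cube m x (Ioo_subset_Icc_self ht)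
  exact ⟨cubeEmbedding m y, ((isometry_cubeEmbedding m).dist_eq x y).trans hy⟩

end Hyperspace

/-- The hyperspace `𝒦([0,1])` of all nonempty compact subsets of the unit interval, with the
Hausdorff metric, has infinite Hausdorff dimension and infinite packing dimension. -/
theorem hyperspace_unit_interval_dim_top :
    dimH (Set.univ : Set (NonemptyCompacts (Icc (0:ℝ) 1))) = ⊤ ∧
    packingDim (fun s δ : ℝ => δ ^ s)
      (Set.univ : Set (NonemptyCompacts (Icc (0:ℝ) 1))) = ⊤ := by
  have hcube (n : ℕ) : (n : ℝ≥0∞) ≤ dimH (range (cubeEmbedding n)) :=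
    dimH_range_cubeEmbedding n ▸ le_self_add
  have hpack (n : ℕ) : dimH (range (cubeEmbedding n)) ≤
      packingDim (fun s δ : ℝ => δ ^ s) (range (cubeEmbedding n)) :=
    dimH_le_packingDim (half_pos (cubeSide_pos n))
      (isCompact_range (isometry_cubeEmbedding n).continuous).totallyBounded
      (exists_dist_eq_of_mem_range_cubeEmbedding n)
  refine ⟨top_unique ?_, top_unique ?_⟩ <;> rw [← ENNReal.iSup_natCast] <;>
    refine iSup_le fun n => (hcube n).trans ?_
  · exact dimH_mono (subset_univ _)
  · exact (hpack n).trans (packingDim_mono (subset_univ _))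

end
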